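/- Let (Ω, 𝓕, P) be a probability space, 𝒢 ⊆ 𝓕 a sub-σ-algebra, S : Ω → ℝ^d a random vector with E[‖S‖²] < ∞, and G : Ω → ℝ^d a random vector with E[‖G‖²] < ∞ and E[|⟨G,S⟩|] < ∞. Assume E[‖S‖² | 𝒢] > 0 almost surely, and define β* := E[⟨G, S⟩ | 𝒢] / E[‖S‖² | 𝒢]. Then for every 𝒢-measurable random variable b : Ω → ℝ with E[b² ‖S‖²] < ∞, one has E[‖G − b·S‖²] ≥ E[‖G − β*·S‖²], with equality if and only if b·S = β*·S almost surely. -/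

import Mathlib

open MeasureTheory
open scoped RealInnerProductSpace

/-!
Write `f = ⟪G, S⟫` and `g = ‖S‖²`, so that `β* E[g | 𝒢] = E[f | 𝒢]`. Pulling a `𝒢`-measurable
factor `h` out of the conditional expectations gives the normal equation `E[h f] = E[h β* g]`:
the residual `G - β*•S` is orthogonal to every `h•S`. For `h = b - β*` this is the Pythagorean
identity `E‖G - b•S‖² = E‖G - β*•S‖² + E‖b•S - β*•S‖²`, from which both claims follow.

The analytic point is that `β*` need not be bounded, so `β*•S ∈ L²` has to be proved first.
With `h = β*` on `{|β*| ≤ c}` and `0` elsewhere, the normal equation reads `E[h f] = E[h² g]`,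
and `2 h f ≤ ‖G‖² + h² g` then bounds `E[β*² g; |β*| ≤ c]` by `E‖G‖²` uniformly in `c`.
-/

open Filter

namespace MeasureTheory

variable {Ω E : Type*} {m m0 : MeasurableSpace Ω} {μ : Measure Ω}
  [NormedAddCommGroup E] [InnerProductSpace ℝ E]

theorem integral_mul_condExp (hm : m ≤ m0) [SigmaFinite (μ.trim hm)] {h f : Ω → ℝ}
    (hh : StronglyMeasurable[m] h) (hhf : Integrable (fun ω => h ω * f ω) μ)
    (hf : Integrable f μ) :
    ∫ ω, h ω * f ω ∂μ = ∫ ω, h ω * (μ[f|m]) ω ∂μ :=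
  (integral_condExp hm).symm.trans
    (integral_congr_ae (condExp_mul_of_stronglyMeasurable_left hh hhf hf))

theorem integral_mul_eq_of_condExp_eq_mul (hm : m ≤ m0) [SigmaFinite (μ.trim hm)]
    {f g β h : Ω → ℝ} (hβ : StronglyMeasurable[m] β) (hh : StronglyMeasurable[m] h)
    (hf : Integrable f μ) (hg : Integrable g μ) (hfg : μ[f|m] =ᵐ[μ] β * μ[g|m])
    (hhf : Integrable (fun ω => h ω * f ω) μ)
    (hhβg : Integrable (fun ω => h ω * β ω * g ω) μ) :
    ∫ ω, h ω * f ω ∂μ = ∫ ω, h ω * β ω * g ω ∂μ :=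
  calc ∫ ω, h ω * f ω ∂μ = ∫ ω, h ω * (μ[f|m]) ω ∂μ := integral_mul_condExp hm hh hhf hf
    _ = ∫ ω, h ω * β ω * (μ[g|m]) ω ∂μ :=
        integral_congr_ae (hfg.mono fun ω hω => by simp [hω, mul_assoc])
    _ = ∫ ω, h ω * β ω * g ω ∂μ := (integral_mul_condExp hm (hh.mul hβ) hhβg hg).symm

theorem integrableOn_sq_mul_of_abs_le {β g : Ω → ℝ} (hβ : Measurable β) (hg : Integrable g μ)
    (c : ℝ) : IntegrableOn (fun ω => β ω ^ 2 * g ω) {ω | |β ω| ≤ c} μ := by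
  refine (hg.norm.const_mul (c ^ 2)).integrableOn.mono'
    ((hβ.pow_const 2).aestronglyMeasurable.mul hg.1).restrict
    (ae_restrict_of_forall_mem ((measurable_abs.comp hβ) measurableSet_Iic) fun ω hω => ?_)
  rw [norm_mul, norm_pow, Real.norm_eq_abs]
  gcongr
  exact hω

theorem MemLp.integrable_inner {X Y : Ω → E} (hX : MemLp X 2 μ) (hY : MemLp Y 2 μ) :
    Integrable (fun ω => ⟪X ω, Y ω⟫) μ :=
  (L2.integrable_inner (hX.toLp X) (hY.toLp Y)).congr <| by
    filter_upwards [hX.coeFn_toLp, hY.coeFn_toLp] with ω hXω hYω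
    rw [hXω, hYω]

theorem integral_norm_sub_sq_of_integral_inner_eq_zero {X Y : Ω → E} (hX : MemLp X 2 μ)
    (hY : MemLp Y 2 μ) (hXY : ∫ ω, ⟪X ω, Y ω⟫ ∂μ = 0) :
    ∫ ω, ‖X ω - Y ω‖ ^ 2 ∂μ = ∫ ω, ‖X ω‖ ^ 2 ∂μ + ∫ ω, ‖Y ω‖ ^ 2 ∂μ := by
  have hX2 : Integrable (fun ω => ‖X ω‖ ^ 2) μ := hX.integrable_norm_pow two_ne_zero
  have hXY2 : Integrable (fun ω => 2 * ⟪X ω, Y ω⟫) μ := (hX.integrable_inner hY).const_mul 2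
  have hsub : Integrable (fun ω => ‖X ω‖ ^ 2 - 2 * ⟪X ω, Y ω⟫) μ := hX2.sub hXY2
  simp_rw [norm_sub_sq_real]
  rw [integral_add hsub (hY.integrable_norm_pow two_ne_zero), integral_sub hX2 hXY2,
    integral_const_mul, hXY]
  ring

section Baseline

variable (hm : m ≤ m0) [SigmaFinite (μ.trim hm)] {G S : Ω → E} {β : Ω → ℝ}
  (hβ : StronglyMeasurable[m] β) (hG : MemLp G 2 μ) (hS : MemLp S 2 μ)
  (hGS : Integrable (fun ω => ⟪G ω, S ω⟫) μ)
  (hfg : μ[fun ω => ⟪G ω, S ω⟫|m] =ᵐ[μ] β * μ[fun ω => ‖S ω‖ ^ 2|m])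
include hm hβ hG hS hGS hfg

theorem setIntegral_sq_mul_norm_sq_le (c : ℝ) :
    ∫ ω in {ω | |β ω| ≤ c}, β ω ^ 2 * ‖S ω‖ ^ 2 ∂μ ≤ ∫ ω, ‖G ω‖ ^ 2 ∂μ := by
  set A := {ω | |β ω| ≤ c}
  have hA : MeasurableSet[m] A := (measurable_abs.comp hβ.measurable) measurableSet_Iic
  set k := A.indicator β
  have hk : StronglyMeasurable[m] k := hβ.indicator hA
  have hkβ : ∀ ω, k ω * β ω = k ω ^ 2 := fun ω => by
    by_cases hω : ω ∈ A <;> simp [k, hω, sq]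
  have hind : A.indicator (fun ω => β ω ^ 2 * ‖S ω‖ ^ 2) = fun ω => k ω * β ω * ‖S ω‖ ^ 2 := by
    ext ω
    by_cases hω : ω ∈ A <;> simp [k, hω, sq]
  have hkf : Integrable (fun ω => k ω * ⟪G ω, S ω⟫) μ := by
    refine hGS.bdd_mul (c := |c|) (hk.mono hm).aestronglyMeasurable (ae_of_all _ fun ω => ?_)
    by_cases hω : ω ∈ A
    · simpa [k, hω] using hω.out.trans (le_abs_self c)
    · simp [k, hω]
  have hkβg : Integrable (fun ω => k ω * β ω * ‖S ω‖ ^ 2) μ := by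
    rw [← hind, integrable_indicator_iff (hm _ hA)]
    exact integrableOn_sq_mul_of_abs_le (hβ.mono hm).measurable
      (hS.integrable_norm_pow two_ne_zero) c
  have hnormal := integral_mul_eq_of_condExp_eq_mul hm hβ hk hGS
    (hS.integrable_norm_pow two_ne_zero) hfg hkf hkβg
  have hpt : ∀ ω, 2 * (k ω * ⟪G ω, S ω⟫) ≤ ‖G ω‖ ^ 2 + k ω * β ω * ‖S ω‖ ^ 2 := fun ω => by
    have := norm_sub_sq_real (G ω) (k ω • S ω)
    rw [real_inner_smul_right, norm_smul, mul_pow, Real.norm_eq_abs, sq_abs] at this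
    nlinarith [sq_nonneg ‖G ω - k ω • S ω‖, hkβ ω]
  have hmono := integral_mono (hkf.const_mul 2) ((hG.integrable_norm_pow two_ne_zero).add hkβg) hpt
  simp only [Pi.add_apply] at hmono
  rw [integral_const_mul, integral_add (hG.integrable_norm_pow two_ne_zero) hkβg] at hmono
  rw [← integral_indicator (hm _ hA), hind]
  linarith

theorem memLp_two_smul_of_condExp_inner_eq_mul : MemLp (fun ω => β ω • S ω) 2 μ := by
  have hβ' : Measurable β := (hβ.mono hm).measurable
  refine (memLp_two_iff_integrable_sq_norm (f := fun ω => β ω • S ω)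
    (hβ'.aestronglyMeasurable.smul hS.1)).2 ?_
  simp_rw [norm_smul, mul_pow, Real.norm_eq_abs, sq_abs]
  have hcover : AECover μ atTop fun n : ℕ => {ω | |β ω| ≤ n} :=
    ⟨ae_of_all _ fun ω => tendsto_natCast_atTop_atTop.eventually_ge_atTop |β ω|,
      fun n => (measurable_abs.comp hβ') measurableSet_Iic⟩
  exact hcover.integrable_of_integral_bounded_of_nonneg_ae _
    (fun n => integrableOn_sq_mul_of_abs_le hβ' (hS.integrable_norm_pow two_ne_zero) n)
    (ae_of_all _ fun ω => by positivity)
    (Eventually.of_forall fun n => setIntegral_sq_mul_norm_sq_le hm hβ hG hS hGS hfg n)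

theorem integral_inner_sub_smul_smul_eq_zero {h : Ω → ℝ} (hh : StronglyMeasurable[m] h)
    (hhS : MemLp (fun ω => h ω • S ω) 2 μ) :
    ∫ ω, ⟪G ω - β ω • S ω, h ω • S ω⟫ ∂μ = 0 := by
  have hβS := memLp_two_smul_of_condExp_inner_eq_mul hm hβ hG hS hGS hfg
  have hinner : ∀ ω, ⟪β ω • S ω, h ω • S ω⟫ = h ω * β ω * ‖S ω‖ ^ 2 := fun ω => by
    rw [real_inner_smul_left, real_inner_smul_right, real_inner_self_eq_norm_sq]
    ring
  have hhf : Integrable (fun ω => h ω * ⟪G ω, S ω⟫) μ := by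
    simpa only [real_inner_smul_right] using hG.integrable_inner hhS
  have hhβg : Integrable (fun ω => h ω * β ω * ‖S ω‖ ^ 2) μ :=
    (hβS.integrable_inner hhS).congr (ae_of_all _ hinner)
  simp_rw [inner_sub_left]
  rw [integral_sub (hG.integrable_inner hhS) (hβS.integrable_inner hhS), sub_eq_zero]
  simp_rw [hinner, real_inner_smul_right]
  exact integral_mul_eq_of_condExp_eq_mul hm hβ hh hGS (hS.integrable_norm_pow two_ne_zero) hfg
    hhf hhβg

theorem integral_norm_sub_smul_sq_eq_add {b : Ω → ℝ} (hb : StronglyMeasurable[m] b)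
    (hbS : MemLp (fun ω => b ω • S ω) 2 μ) :
    ∫ ω, ‖G ω - b ω • S ω‖ ^ 2 ∂μ
      = ∫ ω, ‖G ω - β ω • S ω‖ ^ 2 ∂μ + ∫ ω, ‖b ω • S ω - β ω • S ω‖ ^ 2 ∂μ := by
  have hβS := memLp_two_smul_of_condExp_inner_eq_mul hm hβ hG hS hGS hfg
  have hD : MemLp (fun ω => b ω • S ω - β ω • S ω) 2 μ := hbS.sub hβS
  have horth := integral_inner_sub_smul_smul_eq_zero (h := fun ω => b ω - β ω) hm hβ hG hS hGS
    hfg (hb.sub hβ) (by simpa only [sub_smul] using hD)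
  simp only [sub_smul] at horth
  simpa only [Pi.sub_apply, sub_sub_sub_cancel_right] using
    integral_norm_sub_sq_of_integral_inner_eq_zero (hG.sub hβS) hD horth

end Baseline

end MeasureTheory

/-- Optimal state-dependent baseline, mini-batch size one: the 𝒢-measurable scalar
`β* = E[⟪G,S⟫ | 𝒢] / E[‖S‖² | 𝒢]` minimizes the second moment `E[‖G − b·S‖²]`
over all 𝒢-measurable baselines `b`, with equality iff `b·S = β*·S` a.s. -/
theorem optimal_conditional_baseline
    {Ω : Type*} [m0 : MeasurableSpace Ω] (μ : Measure Ω) [IsProbabilityMeasure μ]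
    (𝒢 : MeasurableSpace Ω) (h𝒢 : 𝒢 ≤ m0)
    {d : ℕ} (G S : Ω → EuclideanSpace ℝ (Fin d))
    (hG : MemLp G 2 μ) (hS : MemLp S 2 μ)
    (hGS : Integrable (fun ω => ⟪G ω, S ω⟫) μ)
    (hpos : ∀ᵐ ω ∂μ, 0 < (μ[fun ω' => ‖S ω'‖ ^ 2 | 𝒢]) ω)
    (βstar : Ω → ℝ)
    (hβstar : βstar = fun ω =>
      (μ[fun ω' => ⟪G ω', S ω'⟫ | 𝒢]) ω / (μ[fun ω' => ‖S ω'‖ ^ 2 | 𝒢]) ω) :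
    ∀ b : Ω → ℝ, Measurable[𝒢] b →
      Integrable (fun ω => (b ω) ^ 2 * ‖S ω‖ ^ 2) μ →
      (∫ ω, ‖G ω - βstar ω • S ω‖ ^ 2 ∂μ) ≤ ∫ ω, ‖G ω - b ω • S ω‖ ^ 2 ∂μ ∧
      ((∫ ω, ‖G ω - b ω • S ω‖ ^ 2 ∂μ) = ∫ ω, ‖G ω - βstar ω • S ω‖ ^ 2 ∂μ ↔
        (fun ω => b ω • S ω) =ᵐ[μ] fun ω => βstar ω • S ω) := by
  intro b hb hb2
  have hβ : StronglyMeasurable[𝒢] βstar := by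
    rw [hβstar]
    exact (stronglyMeasurable_condExp.measurable.div
      stronglyMeasurable_condExp.measurable).stronglyMeasurable
  have hfg : μ[fun ω => ⟪G ω, S ω⟫|𝒢] =ᵐ[μ] βstar * μ[fun ω => ‖S ω‖ ^ 2|𝒢] := by
    filter_upwards [hpos] with ω hω
    simp [hβstar, div_mul_cancel₀ _ hω.ne']
  have hbS : MemLp (fun ω => b ω • S ω) 2 μ :=
    (memLp_two_iff_integrable_sq_norm ((hb.mono h𝒢 le_rfl).aestronglyMeasurable.smul hS.1)).2
      (by simpa [norm_smul, mul_pow] using hb2)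
  have hD : MemLp (fun ω => b ω • S ω - βstar ω • S ω) 2 μ :=
    hbS.sub (memLp_two_smul_of_condExp_inner_eq_mul h𝒢 hβ hG hS hGS hfg)
  rw [integral_norm_sub_smul_sq_eq_add h𝒢 hβ hG hS hGS hfg hb.stronglyMeasurable hbS]
  refine ⟨le_add_of_nonneg_right (integral_nonneg fun ω => by positivity), ?_⟩
  rw [add_eq_left, integral_eq_zero_iff_of_nonneg (fun ω => by positivity)
    (hD.integrable_norm_pow two_ne_zero)]
  exact eventually_congr (ae_of_all _ fun ω => by simp [sub_eq_zero])
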